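/- Let ψ : F^× \ A_F^× → ℂ^× be a Hecke character of a number field F such that at each infinite place v there exist m_v ∈ ℤ_{≤0} and an embedding τ_v with ψ_v(z) = τ_v(z)^{m_v} on the identity component of F_v^×. Then for every finite place v and every uniformizer ϖ_v of F_v, the value ψ_v(ϖ_v) is an algebraic integer. -/

import Mathlib

/-!
Let `h` be the class number and `𝔭_v ^ h = (b)`. Then `b` is a unit at every finite place
`w ≠ v`, and `u = b ϖ⁻ʰ` is a unit of `𝒪_v`. Since the unit groups of the finite rings
`𝒪 ⧸ 𝔭 ^ N` are finite (and `𝒪` is dense in `𝒪_v`), some even power `a = b ^ t` is `≡ 1`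
modulo the conductor of `ψ` at every `w ≠ v`, while `u ^ t` lies in the kernel of `ψ_v`.
Hence `ψ_w(a) = 1` for `w ≠ v` and `ψ_v(a) = ψ_v(ϖ) ^ (h t)`, and triviality on `F^×` gives
`ψ_v(ϖ) ^ (h t) = ψ_∞(a)⁻¹ = ∏_w τ_w(a) ^ (-m_w)`: an algebraic integer, because `a` is a
totally positive algebraic integer and `m_w ≤ 0`.
-/

open NumberField IsDedekindDomain WithZero

theorem Valuation.map_pow_sub_pow_le {R Γ₀ : Type*} [CommRing R]
    [LinearOrderedCommMonoidWithZero Γ₀] (v : Valuation R Γ₀) {x y : R} (hx : v x ≤ 1)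
    (hy : v y ≤ 1) (k : ℕ) : v (x ^ k - y ^ k) ≤ v (x - y) := by
  rw [← geom_sum₂_mul, map_mul]
  refine mul_le_of_le_one_left' (v.map_sum_le fun i _ => ?_)
  rw [map_mul, map_pow, map_pow]
  exact mul_le_one' (pow_le_one' hx _) (pow_le_one' hy _)

theorem Ideal.exists_pow_sub_one_mem_of_isUnit {R : Type*} [CommRing R] {I : Ideal R}
    [Finite (R ⧸ I)] {r : R} (hr : IsUnit (Ideal.Quotient.mk I r)) :
    ∃ k, 0 < k ∧ ∀ t, k ∣ t → r ^ t - 1 ∈ I := by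
  refine ⟨orderOf hr.unit, orderOf_pos _, fun t ⟨j, hj⟩ => ?_⟩
  rw [← Ideal.Quotient.eq, map_pow, ← hr.unit_spec, ← Units.val_pow_eq_pow_val, hj, pow_mul,
    pow_orderOf_eq_one, one_pow, Units.val_one, map_one]

theorem IsIntegral.inv_zpow_of_nonpos {R A : Type*} [CommRing R] [Field A] [Algebra R A]
    {x : A} (hx : IsIntegral R x) {m : ℤ} (hm : m ≤ 0) : IsIntegral R (x ^ m)⁻¹ := by
  obtain ⟨k, rfl⟩ := Int.exists_eq_neg_ofNat hm
  rw [zpow_neg, inv_inv, zpow_natCast]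
  exact hx.pow k

theorem Ideal.isPrincipal_pow_card_classGroup {R : Type*} [CommRing R] [IsDedekindDomain R]
    [Fintype (ClassGroup R)] (I : Ideal R) : (I ^ Fintype.card (ClassGroup R)).IsPrincipal := by
  rcases eq_or_ne I 0 with rfl | hI0
  · simpa [zero_pow Fintype.card_ne_zero] using bot_isPrincipal
  have hI : I ∈ nonZeroDivisors (Ideal R) := mem_nonZeroDivisors_of_ne_zero hI0
  rw [← ClassGroup.mk0_eq_one_iff (pow_mem hI _), ← SubmonoidClass.mk_pow I hI, map_pow,
    pow_card_eq_one]

namespace IsDedekindDomain.HeightOneSpectrum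

variable {R K : Type*} [CommRing R] [IsDedekindDomain R] [Field K] [Algebra R K]
  [IsFractionRing R K] (v : HeightOneSpectrum R)

theorem valued_algebraMap_lt_of_mem_pow {r : R} {n : ℕ} (hr : r ∈ v.asIdeal ^ (n + 1)) :
    Valued.v (algebraMap R (v.adicCompletion K) r) < exp (-(n : ℤ)) := by
  rw [valuedAdicCompletion_eq_valuation, valuation_of_algebraMap]
  refine ((v.intValuation_le_pow_iff_mem r (n + 1)).mpr hr).trans_lt ?_
  exact exp_lt_exp.mpr (by omega)

theorem exists_valued_sub_algebraMap_lt {x : v.adicCompletion K} (hx : Valued.v x ≤ 1)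
    {γ : ℤᵐ⁰} (hγ : γ ≠ 0) :
    ∃ r : R, Valued.v (x - algebraMap R (v.adicCompletion K) r) < γ := by
  obtain ⟨z, hz⟩ := valuedAdicCompletion_surjective K v (min γ 1)
  have hz0 : Valued.v.restrict z ≠ 0 :=
    ((Valued.v.restrict_pos_iff z).mpr (hz ▸ lt_min (zero_lt_iff.mpr hγ) one_pos)).ne'
  have hball : {y | Valued.v (y - x) < min γ 1} ∈ nhds x :=
    Valued.mem_nhds.mpr ⟨Units.mk0 _ hz0, fun y hy => hz ▸ (Valued.v.restrict_lt_iff).mp hy⟩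
  obtain ⟨c, hc⟩ := (denseRange_algebraMap K v).mem_nhds hball
  have hc' : Valued.v (algebraMap K (v.adicCompletion K) c - x) < min γ 1 := hc
  have hc1 : v.valuation K c ≤ 1 := by
    rw [← valuedAdicCompletion_eq_valuation', ← sub_add_cancel (c : v.adicCompletion K) x]
    exact Valued.v.map_add_le (hc'.le.trans (min_le_right _ _)) hx
  obtain ⟨r, hr⟩ := v.exists_valuation_sub_lt_of_integer hc1 (Units.mk0 γ hγ)
  refine ⟨r, ?_⟩
  have hcr : Valued.v (algebraMap K (v.adicCompletion K) c -
      algebraMap R (v.adicCompletion K) r) < γ := by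
    rw [IsScalarTower.algebraMap_apply R K (v.adicCompletion K), ← map_sub]
    exact (valuedAdicCompletion_eq_valuation' v (c - algebraMap R K r)).trans_lt
      (by rwa [Valuation.map_sub_swap])
  rw [← sub_add_sub_cancel _ (algebraMap K (v.adicCompletion K) c)]
  refine Valued.v.map_add_lt ?_ hcr
  rw [Valued.v.map_sub_swap]
  exact hc'.trans_le (min_le_left _ _)

theorem exists_valued_pow_sub_one_lt [Ring.HasFiniteQuotients R] {x : v.adicCompletion K}
    (hx : Valued.v x = 1) (n : ℕ) :
    ∃ k, 0 < k ∧ ∀ t, k ∣ t → Valued.v (x ^ t - 1) < exp (-(n : ℤ)) := by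
  obtain ⟨d, hd⟩ := v.exists_valued_sub_algebraMap_lt hx.le (exp_ne_zero (a := -(n : ℤ)))
  have hd1 : Valued.v (algebraMap R (v.adicCompletion K) d) = 1 := by
    refine hx ▸ Valued.v.map_eq_of_sub_lt ?_
    rw [Valued.v.map_sub_swap, hx]
    exact hd.trans_le (exp_le_exp.mpr (by omega))
  have hdv : d ∉ v.asIdeal := by
    rwa [valuedAdicCompletion_eq_valuation, valuation_eq_one_iff_notMem] at hd1
  have : Finite (R ⧸ v.asIdeal ^ (n + 1)) :=
    Ring.HasFiniteQuotients.finiteQuotient (pow_ne_zero _ v.ne_bot)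
  obtain ⟨k, hk, hkt⟩ := Ideal.exists_pow_sub_one_mem_of_isUnit
    (Ideal.Quotient.isUnit_mk_pow_of_notMem (n := n + 1) _ hdv)
  refine ⟨k, hk, fun t ht => ?_⟩
  rw [← sub_add_sub_cancel _ (algebraMap R (v.adicCompletion K) d ^ t)]
  refine Valued.v.map_add_lt ((Valued.v.map_pow_sub_pow_le hx.le hd1.le t).trans_lt hd) ?_
  simpa using v.valued_algebraMap_lt_of_mem_pow (K := K) (hkt t ht)

theorem exists_intValuation_eq_and_notMem [Fintype (ClassGroup R)] :
    ∃ b : R, v.intValuation b = exp (-(Fintype.card (ClassGroup R) : ℤ)) ∧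
      ∀ w ≠ v, b ∉ w.asIdeal := by
  obtain ⟨b, hb⟩ := (v.asIdeal.isPrincipal_pow_card_classGroup).principal
  rw [Ideal.submodule_span_eq] at hb
  have hb0 : b ≠ 0 := by
    rintro rfl
    exact pow_ne_zero _ v.ne_bot (hb.trans (Ideal.span_singleton_eq_bot.mpr rfl))
  refine ⟨b, ?_, fun w hwv hbw => hwv ?_⟩
  · rw [v.intValuation_eq_exp_neg_multiplicity hb0, ← hb, multiplicity_pow_self_of_prime v.prime]
  · have hvw : v.asIdeal ^ _ ≤ w.asIdeal := hb ▸ (Ideal.span_singleton_le_iff_mem _).mpr hbw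
    exact (HeightOneSpectrum.ext ((v.isMaximal.eq_of_le w.isPrime.ne_top
      (w.isPrime.le_of_pow_le hvw)))).symm

theorem exists_sq_apply_eq_pow_uniformizer {G : Type*} [Monoid G] [Fintype (ClassGroup R)]
    [Ring.HasFiniteQuotients R] (ψ : ∀ w : HeightOneSpectrum R, (w.adicCompletion K)ˣ →* G)
    (S : Finset (HeightOneSpectrum R)) (n : HeightOneSpectrum R → ℕ)
    (hψ : ∀ w (u : (w.adicCompletion K)ˣ), Valued.v (u : w.adicCompletion K) = 1 →
      (w ∈ S → Valued.v ((u : w.adicCompletion K) - 1) < exp (-(n w : ℤ))) → ψ w u = 1)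
    {ϖ : (v.adicCompletion K)ˣ} (hϖ : Valued.v (ϖ : v.adicCompletion K) = exp (-1)) :
    ∃ (c : R) (a : Kˣ) (e : ℕ), (a : K) = algebraMap R K c ^ 2 ∧ 0 < e ∧
      (∀ w ≠ v, ψ w (Units.map (algebraMap K (w.adicCompletion K)).toMonoidHom a) = 1) ∧
      ψ v (Units.map (algebraMap K (v.adicCompletion K)).toMonoidHom a) = ψ v ϖ ^ e := by
  classical
  obtain ⟨b, hbv, hbw⟩ := v.exists_intValuation_eq_and_notMem
  set h := Fintype.card (ClassGroup R)
  have hb0 : algebraMap R K b ≠ 0 := by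
    refine (map_ne_zero_iff _ (IsFractionRing.injective R K)).mpr ?_
    rintro rfl
    exact exp_ne_zero (hbv.symm.trans (map_zero _))
  set B : Kˣ := Units.mk0 _ hb0
  set ι : ∀ w : HeightOneSpectrum R, Kˣ →* (w.adicCompletion K)ˣ :=
    fun w => Units.map (algebraMap K (w.adicCompletion K)).toMonoidHom
  have hB : ∀ w, Valued.v (ι w B : w.adicCompletion K) = w.valuation K (algebraMap R K b) :=
    fun w => valuedAdicCompletion_eq_valuation' w _
  set u := ι v B * (ϖ ^ h)⁻¹
  have hu : Valued.v (u : v.adicCompletion K) = 1 := by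
    simp [u, hB, valuation_of_algebraMap, hbv, hϖ, ← exp_nsmul]
  obtain ⟨k₀, hk₀, hk₀t⟩ := v.exists_valued_pow_sub_one_lt hu (n v)
  have hcong : ∀ w ∈ S.erase v, ∃ k, 0 < k ∧ ∀ t, k ∣ t →
      Valued.v ((ι w B : w.adicCompletion K) ^ t - 1) < exp (-(n w : ℤ)) := fun w hw =>
    w.exists_valued_pow_sub_one_lt
      (by rw [hB, valuation_eq_one_iff_notMem]; exact hbw w (Finset.ne_of_mem_erase hw)) _
  choose! k hk hkt using hcong
  -- `t` is even so that `a` is a square, hence totally positive at the real places.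
  set t := 2 * k₀ * ∏ w ∈ S.erase v, k w
  refine ⟨b ^ (k₀ * ∏ w ∈ S.erase v, k w), B ^ t, h * t, by simp [B, t]; ring, ?_, ?_, ?_⟩
  · exact Nat.mul_pos Fintype.card_pos (Nat.mul_pos (by omega) (Finset.prod_pos hk))
  · intro w hwv
    refine hψ w _ ?_ fun hwS => ?_
    · rw [map_pow, Units.val_pow_eq_pow_val, map_pow, hB,
        (w.valuation_eq_one_iff_notMem (K := K)).mpr (hbw w hwv), one_pow]
    · rw [map_pow, Units.val_pow_eq_pow_val]
      exact hkt w (Finset.mem_erase.mpr ⟨hwv, hwS⟩) t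
        (Dvd.dvd.mul_left (Finset.dvd_prod_of_mem _ (Finset.mem_erase.mpr ⟨hwv, hwS⟩)) _)
  · have hBu : ι v B = u * ϖ ^ h := by simp [u]
    rw [map_pow, hBu, mul_pow, ← pow_mul, map_mul, map_pow (ψ v) ϖ, hψ v (u ^ t) ?_ ?_,
      one_mul]
    · rw [Units.val_pow_eq_pow_val, map_pow, hu, one_pow]
    · exact fun _ => hk₀t t ((dvd_mul_left k₀ 2).mul_right _)

end IsDedekindDomain.HeightOneSpectrum

theorem NumberField.isIntegral_inv_of_isSquare {F : Type*} [Field F] [NumberField F]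
    (ψinf : (mixedEmbedding.mixedSpace F)ˣ →* ℂˣ)
    (m : InfinitePlace F → ℤ) (hm : ∀ w, m w ≤ 0)
    (harch : ∀ u : (mixedEmbedding.mixedSpace F)ˣ,
      (∀ wr : {w : InfinitePlace F // w.IsReal},
        0 < (u : mixedEmbedding.mixedSpace F).1 wr) →
      (ψinf u : ℂ) =
        (∏ᶠ wr : {w : InfinitePlace F // w.IsReal},
          (((u : mixedEmbedding.mixedSpace F).1 wr : ℂ)) ^ (m wr.1)) *
        ∏ᶠ wc : {w : InfinitePlace F // w.IsComplex},
          ((u : mixedEmbedding.mixedSpace F).2 wc) ^ (m wc.1))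
    {a : Fˣ} (ha : IsIntegral ℤ (a : F)) (ha_sq : IsSquare (a : F)) :
    IsIntegral ℤ ((ψinf (Units.map (mixedEmbedding F).toMonoidHom a) : ℂ)⁻¹) := by
  classical
  set u := Units.map (mixedEmbedding F).toMonoidHom a
  have hu : (u : mixedEmbedding.mixedSpace F) = mixedEmbedding F a := rfl
  have hint : ∀ φ : F →+* ℂ, IsIntegral ℤ (φ a) := fun φ => ha.map φ.toIntAlgHom
  obtain ⟨c, hc⟩ := ha_sq
  have hc0 : c ≠ 0 := by rintro rfl; simp at hc
  have hpos (wr : {w : InfinitePlace F // w.IsReal}) :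
      0 < (u : mixedEmbedding.mixedSpace F).1 wr := by
    rw [hu, mixedEmbedding.mixedEmbedding_apply_isReal, hc, map_mul]
    exact mul_self_pos.mpr ((map_ne_zero _).mpr hc0)
  rw [harch u hpos, mul_inv, finprod_eq_prod_of_fintype, finprod_eq_prod_of_fintype,
    ← Finset.prod_inv_distrib, ← Finset.prod_inv_distrib]
  refine (IsIntegral.prod _ fun wr _ => ?_).mul (IsIntegral.prod _ fun wc _ => ?_)
  · refine IsIntegral.inv_zpow_of_nonpos ?_ (hm _)
    rw [hu, mixedEmbedding.mixedEmbedding_apply_isReal, InfinitePlace.embedding_of_isReal_apply]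
    exact hint _
  · refine IsIntegral.inv_zpow_of_nonpos ?_ (hm _)
    rw [hu, mixedEmbedding.mixedEmbedding_apply_isComplex]
    exact hint _

theorem stmt_13_general (F : Type*) [Field F] [NumberField F]
    (ψf : ∀ v : HeightOneSpectrum (𝓞 F), (v.adicCompletion F)ˣ →* ℂˣ)
    (ψinf : (NumberField.mixedEmbedding.mixedSpace F)ˣ →* ℂˣ)
    (m : NumberField.InfinitePlace F → ℤ) (hm : ∀ w, m w ≤ 0)
    (harch : ∀ u : (NumberField.mixedEmbedding.mixedSpace F)ˣ,
      (∀ wr : {w : NumberField.InfinitePlace F // w.IsReal},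
        0 < (u : NumberField.mixedEmbedding.mixedSpace F).1 wr) →
      (ψinf u : ℂ) =
        (∏ᶠ wr : {w : NumberField.InfinitePlace F // w.IsReal},
          (((u : NumberField.mixedEmbedding.mixedSpace F).1 wr : ℂ)) ^ (m wr.1)) *
        ∏ᶠ wc : {w : NumberField.InfinitePlace F // w.IsComplex},
          ((u : NumberField.mixedEmbedding.mixedSpace F).2 wc) ^ (m wc.1))
    (hcont : ∃ S : Finset (HeightOneSpectrum (𝓞 F)),
      (∀ v : HeightOneSpectrum (𝓞 F), v ∉ S → ∀ u : (v.adicCompletion F)ˣ,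
        Valued.v (u : v.adicCompletion F) = 1 → ψf v u = 1) ∧
      (∀ v ∈ S, ∃ n : ℕ, ∀ u : (v.adicCompletion F)ˣ,
        Valued.v ((u : v.adicCompletion F) - 1) <
          ((Multiplicative.ofAdd (-(n : ℤ)) : Multiplicative ℤ) :
            WithZero (Multiplicative ℤ)) → ψf v u = 1))
    (htriv : ∀ a : Fˣ,
      ψinf (Units.map (NumberField.mixedEmbedding F).toMonoidHom a) *
        ∏ᶠ v : HeightOneSpectrum (𝓞 F),
          ψf v (Units.map (algebraMap F (v.adicCompletion F)).toMonoidHom a) = 1) :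
    ∀ v : HeightOneSpectrum (𝓞 F), ∀ ϖ : (v.adicCompletion F)ˣ,
      Valued.v (ϖ : v.adicCompletion F) =
        ((Multiplicative.ofAdd (-1 : ℤ) : Multiplicative ℤ) :
          WithZero (Multiplicative ℤ)) →
      IsIntegral ℤ ((ψf v ϖ : ℂˣ) : ℂ) := by
  intro v ϖ hϖ
  obtain ⟨S, hS_out, hS_in⟩ := hcont
  choose! n hn using hS_in
  have hψ : ∀ w (u : (w.adicCompletion F)ˣ), Valued.v (u : w.adicCompletion F) = 1 →
      (w ∈ S → Valued.v ((u : w.adicCompletion F) - 1) < exp (-(n w : ℤ))) → ψf w u = 1 :=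
    fun w u hu hS => (em (w ∈ S)).elim (fun hw => hn w hw u (hS hw)) (fun hw => hS_out w hw u hu)
  obtain ⟨c, a, e, hac, he, h_away, h_at⟩ :=
    v.exists_sq_apply_eq_pow_uniformizer ψf S n hψ hϖ
  have h_prod := htriv a
  rw [finprod_eq_single _ v h_away, h_at] at h_prod
  have h_pow := congrArg Units.val (eq_inv_of_mul_eq_one_right h_prod)
  rw [Units.val_pow_eq_pow_val, Units.val_inv_eq_inv_val] at h_pow
  have ha : IsIntegral ℤ (a : F) := hac ▸ (RingOfIntegers.isIntegral_coe c).pow 2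
  exact IsIntegral.of_pow he
    (h_pow ▸ isIntegral_inv_of_isSquare ψinf m hm harch ha ⟨_, hac.trans (sq _)⟩)

/-- Integrality of the values of an algebraic Hecke character at uniformizers.
A Hecke character `ψ` of a number field `F` is presented by its local components:
characters `ψf v` of `F_v^×` at the finite places `v`, and a character `ψ∞` of the
units of the archimedean completion `F_∞ = ℝ^{r₁} × ℂ^{r₂}` (the mixed space).
We assume:
* (continuity) the finite components are trivial on an open compact subgroup of
  `∏ O_w^×`, i.e. `ψf v` is trivial on the unit integers for `v` outside a finite set
  `S`, and trivial on a principal congruence neighborhood of `1` for `v ∈ S`;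
* (algebraicity at `∞`) there are `m_w ∈ ℤ_{≤0}` with
  `ψ∞(z) = ∏_w τ_w(z)^{m_w}` on the identity component `(F_∞^×)^0`;
* (triviality on `F^×`) for every `a ∈ F^×` the product of all local components at
  `a` equals `1` (the product over finite places having finite support).
Then for every finite place `v` and every uniformizer `ϖ_v` of `F_v`, the value
`ψf v (ϖ_v)` is an algebraic integer. -/
theorem stmt_13 (F : Type*) [Field F] [NumberField F]
    (ψf : ∀ v : HeightOneSpectrum (𝓞 F), (v.adicCompletion F)ˣ →* ℂˣ)
    (ψinf : (NumberField.mixedEmbedding.mixedSpace F)ˣ →* ℂˣ)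
    (m : NumberField.InfinitePlace F → ℤ) (hm : ∀ w, m w ≤ 0)
    (harch : ∀ u : (NumberField.mixedEmbedding.mixedSpace F)ˣ,
      (∀ wr : {w : NumberField.InfinitePlace F // w.IsReal},
        0 < (u : NumberField.mixedEmbedding.mixedSpace F).1 wr) →
      (ψinf u : ℂ) =
        (∏ᶠ wr : {w : NumberField.InfinitePlace F // w.IsReal},
          (((u : NumberField.mixedEmbedding.mixedSpace F).1 wr : ℂ)) ^ (m wr.1)) *
        ∏ᶠ wc : {w : NumberField.InfinitePlace F // w.IsComplex},
          ((u : NumberField.mixedEmbedding.mixedSpace F).2 wc) ^ (m wc.1))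
    (hcont : ∃ S : Finset (HeightOneSpectrum (𝓞 F)),
      (∀ v : HeightOneSpectrum (𝓞 F), v ∉ S → ∀ u : (v.adicCompletion F)ˣ,
        Valued.v (u : v.adicCompletion F) = 1 → ψf v u = 1) ∧
      (∀ v ∈ S, ∃ n : ℕ, ∀ u : (v.adicCompletion F)ˣ,
        Valued.v ((u : v.adicCompletion F) - 1) <
          ((Multiplicative.ofAdd (-(n : ℤ)) : Multiplicative ℤ) :
            WithZero (Multiplicative ℤ)) → ψf v u = 1))
    (hsupp : ∀ a : Fˣ,
      (Function.mulSupport fun v : HeightOneSpectrum (𝓞 F) =>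
        ψf v (Units.map (algebraMap F (v.adicCompletion F)).toMonoidHom a)).Finite)
    (htriv : ∀ a : Fˣ,
      ψinf (Units.map (NumberField.mixedEmbedding F).toMonoidHom a) *
        ∏ᶠ v : HeightOneSpectrum (𝓞 F),
          ψf v (Units.map (algebraMap F (v.adicCompletion F)).toMonoidHom a) = 1) :
    ∀ v : HeightOneSpectrum (𝓞 F), ∀ ϖ : (v.adicCompletion F)ˣ,
      Valued.v (ϖ : v.adicCompletion F) =
        ((Multiplicative.ofAdd (-1 : ℤ) : Multiplicative ℤ) :
          WithZero (Multiplicative ℤ)) →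
      IsIntegral ℤ ((ψf v ϖ : ℂˣ) : ℂ) :=
  stmt_13_general F ψf ψinf m hm harch hcont htriv
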